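/- Let 𝒯 = {𝒯⁽¹⁾,…,𝒯⁽ᵏ⁾} be a set of k rooted phylogenetic trees in which every node has degree at most D. For every sub-forest 𝒜 of 𝒯 and every integer d with 2 ≤ d ≤ kD, the number of decompositions (ℬ₁,…,ℬ_d) of 𝒜 into d sub-forests is less than (d+2)^{kD}; more precisely, for each s ≤ k the number of possible sequences (ℬ₁⁽ˢ⁾,…,ℬ_d⁽ˢ⁾) is at most (d+1)^D + d < (d+2)^D. -/

import Mathlib

/-- Rooted, unordered, leaf-labelled trees:
a tree is a single labelled leaf, or an (internal) root node with a list of subtrees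
attached to it.  Being unordered, such trees are considered up to the
isomorphism `PTree.Iso` below.  The empty tree is represented by `none` in
`Option (PTree α)`. -/
inductive PTree (α : Type) : Type where
  | leaf : α → PTree α
  | node : List (PTree α) → PTree α

namespace PTree

variable {α : Type} [DecidableEq α]

theorem sizeOf_lt_of_mem {α : Type} {c : PTree α} {cs : List (PTree α)}
    (h : c ∈ cs) : sizeOf c < sizeOf (PTree.node cs) := by
  have := List.sizeOf_lt_of_mem h
  simp only [node.sizeOf_spec]; omega

/-- `Subtree s t` : `s` is the complete subtree rooted at some node of `t`. -/
inductive Subtree : PTree α → PTree α → Prop where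
  | refl (t : PTree α) : Subtree t t
  | child {s c : PTree α} {cs : List (PTree α)} :
      c ∈ cs → Subtree s c → Subtree s (node cs)

/-- The list of leaf labels of a tree. -/
def labelList : PTree α → List α
  | leaf a => [a]
  | node cs => cs.attach.flatMap (fun c => labelList c.1)
decreasing_by exact sizeOf_lt_of_mem c.2

/-- The set `L(T)` of leaf labels of a tree. -/
def labels (t : PTree α) : Finset α := t.labelList.toFinset

/-- The size of a tree: the number of its leaves. -/
def treeSize (t : PTree α) : ℕ := t.labels.card

/-- The label set of a possibly empty tree. -/
def olabels : Option (PTree α) → Finset α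
  | none => ∅
  | some t => t.labels

/-- Connecting a list of trees by a common root.  The empty list yields the
empty tree and a single tree yields that tree itself (no degree-two node is
created). -/
def connect : List (PTree α) → Option (PTree α)
  | [] => none
  | [t] => some t
  | ts => some (node ts)

/-- The restriction `T|S` of `T` to a label set `S`: all leaves with labels
outside `S` are removed and all internal nodes of degree two are suppressed. -/
def restrict (S : Finset α) : PTree α → Option (PTree α)
  | leaf a => if a ∈ S then some (leaf a) else none
  | node cs => connect ((cs.attach.map (fun c => restrict S c.1)).reduceOption)
decreasing_by exact sizeOf_lt_of_mem c.2

/-- Restriction of a possibly empty tree. -/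
def orestrict (S : Finset α) (t : Option (PTree α)) : Option (PTree α) :=
  t.bind (restrict S)

/-- Isomorphism (equality) of unordered leaf-labelled trees: equality of trees
up to reordering of the children of each node. -/
inductive Iso : PTree α → PTree α → Prop where
  | leaf (a : α) : Iso (leaf a) (leaf a)
  | node {cs ds ds' : List (PTree α)} :
      List.Forall₂ Iso cs ds' → ds'.Perm ds → Iso (node cs) (node ds)

/-- One edge contraction: the edge between a node and one of its (internal)
children is contracted, merging the child into the parent. -/
inductive Contract : PTree α → PTree α → Prop where
  | top (l r ds : List (PTree α)) :
      Contract (node (l ++ node ds :: r)) (node (l ++ ds ++ r))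
  | child {c c' : PTree α} (l r : List (PTree α)) :
      Contract c c' → Contract (node (l ++ c :: r)) (node (l ++ c' :: r))

/-- `T` refines `T'` (written `T ⊵ T'`): `T'` can be obtained (as an
unordered tree) by contracting some edges of `T`. -/
def Refines (t t' : PTree α) : Prop :=
  ∃ u, Relation.ReflTransGen Contract t u ∧ Iso u t'

/-- Refinement of possibly empty trees. -/
def ORefines : Option (PTree α) → Option (PTree α) → Prop
  | none, none => True
  | some a, some b => Refines a b
  | _, _ => False

/-- Isomorphism (equality) of possibly empty unordered trees. -/
def OIso : Option (PTree α) → Option (PTree α) → Prop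
  | none, none => True
  | some a, some b => Iso a b
  | _, _ => False

/-- A possibly empty tree is (empty or) a complete subtree of `T`. -/
def OSubtree (T : PTree α) : Option (PTree α) → Prop
  | none => True
  | some t => Subtree t T

/-- No internal node of degree two (after the usual suppression convention):
every internal node of the rooted tree has at least two children. -/
def NoUnaryNodes (T : PTree α) : Prop :=
  ∀ cs : List (PTree α), Subtree (node cs) T → 2 ≤ cs.length

/-- Every node of the rooted tree has degree at most `D` (the degree of the
root is its number of children; the degree of any other internal node is its
number of children plus one). -/
def DegLE (D : ℕ) (T : PTree α) : Prop :=
  (∀ cs : List (PTree α), T = node cs → cs.length ≤ D) ∧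
  (∀ cs : List (PTree α), Subtree (node cs) T → node cs ≠ T → cs.length + 1 ≤ D)

/-- A rooted tree is binary if every internal node has exactly two children. -/
def Binary (T : PTree α) : Prop :=
  ∀ cs : List (PTree α), Subtree (node cs) T → cs.length = 2

/-- A cut-subtree of `T`: the empty tree, or the tree obtained by selecting
some (at least one) of the subtrees attached to an internal node of `T` and
connecting those subtrees by a common root. -/
def IsCutSubtree (T : PTree α) (a : Option (PTree α)) : Prop :=
  a = none ∨ ∃ cs sel : List (PTree α),
    Subtree (node cs) T ∧ sel.Sublist cs ∧ sel ≠ [] ∧ a = connect sel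

variable {k : ℕ}

/-- A cut-subforest of `𝒯`: each component is a cut-subtree of the
corresponding tree, and at least one component is nonempty. -/
def IsCutSubforest (𝒯 : Fin k → PTree α) (A : Fin k → Option (PTree α)) : Prop :=
  (∀ i, IsCutSubtree (𝒯 i) (A i)) ∧ ∃ i, A i ≠ none

/-- A sub-forest of `𝒯`: each component is the empty tree or a complete
subtree rooted at some node of the corresponding tree, and at least one
component is nonempty. -/
def IsSubForest (𝒯 : Fin k → PTree α) (A : Fin k → Option (PTree α)) : Prop :=
  (∀ i, OSubtree (𝒯 i) (A i)) ∧ ∃ i, A i ≠ none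

/-- The set of all labels occurring in the trees of `𝒯`. -/
def allLabels (𝒯 : Fin k → PTree α) : Finset α :=
  Finset.univ.biUnion fun i => (𝒯 i).labels

/-- A (cut-sub)forest is terminal if each component is the empty tree or a
single leaf of the corresponding tree. -/
def IsTerminal (𝒯 : Fin k → PTree α) (A : Fin k → Option (PTree α)) : Prop :=
  ∀ i, A i = none ∨ ∃ a : α, A i = some (leaf a) ∧ Subtree (leaf a) (𝒯 i)

/-- `Λ(𝒜) = { l ∈ ⋃_j L(𝒜⁽ʲ⁾) ∣ ∀ i, l ∉ L(𝒯⁽ⁱ⁾) − L(𝒜⁽ⁱ⁾) }`. -/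
def lambdaSet (𝒯 : Fin k → PTree α) (A : Fin k → Option (PTree α)) : Finset α :=
  (Finset.univ.biUnion fun j => olabels (A j)).filter
    fun l => ∀ i, l ∉ (𝒯 i).labels \ olabels (A i)

/-- `Y` is a compatible supertree of the forest `A`:
`Y|L(A⁽ⁱ⁾) ⊵ A⁽ⁱ⁾|L(Y)` for every `i`. -/
def IsCompatibleSupertree (A : Fin k → Option (PTree α)) (Y : PTree α) : Prop :=
  ∀ i, ORefines (restrict (olabels (A i)) Y) (orestrict Y.labels (A i))

/-- `X` is an agreement supertree of the forest `A`:
`X|L(A⁽ⁱ⁾) = A⁽ⁱ⁾|L(X)` (as unordered trees) for every `i`. -/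
def IsAgreementSupertree (A : Fin k → Option (PTree α)) (X : PTree α) : Prop :=
  ∀ i, OIso (restrict (olabels (A i)) X) (orestrict X.labels (A i))

/-- An embedded supertree of a cut-subforest `A` of `𝒯`: a distinctly
leaf-labelled compatible supertree `Y` of `A`, with leaves labelled by labels
of `𝒯`, such that `L(Y) ∩ L(𝒯⁽ⁱ⁾) ⊆ L(A⁽ⁱ⁾)` for all `i`. -/
def IsEmbeddedSupertree (𝒯 : Fin k → PTree α) (A : Fin k → Option (PTree α))
    (Y : PTree α) : Prop :=
  Y.labelList.Nodup ∧ Y.labels ⊆ allLabels 𝒯 ∧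
  IsCompatibleSupertree A Y ∧
  ∀ i, Y.labels ∩ (𝒯 i).labels ⊆ olabels (A i)

/-- An enclosed supertree of a sub-forest `A` of `𝒯`: a distinctly
leaf-labelled agreement supertree `X` of `A`, with leaves labelled by labels
of `𝒯`, such that `L(X) ∩ L(𝒯⁽ⁱ⁾) ⊆ L(A⁽ⁱ⁾)` for all `i`. -/
def IsEnclosedSupertree (𝒯 : Fin k → PTree α) (A : Fin k → Option (PTree α))
    (X : PTree α) : Prop :=
  X.labelList.Nodup ∧ X.labels ⊆ allLabels 𝒯 ∧
  IsAgreementSupertree A X ∧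
  ∀ i, X.labels ∩ (𝒯 i).labels ⊆ olabels (A i)

/-- `mcsp 𝒯 A` : the maximum size of an embedded supertree of `A`. -/
noncomputable def mcsp (𝒯 : Fin k → PTree α) (A : Fin k → Option (PTree α)) : ℕ :=
  sSup {m : ℕ | ∃ Y : PTree α, IsEmbeddedSupertree 𝒯 A Y ∧ m = Y.treeSize}

/-- `masp 𝒯 A` : the maximum size of an enclosed supertree of `A`. -/
noncomputable def masp (𝒯 : Fin k → PTree α) (A : Fin k → Option (PTree α)) : ℕ :=
  sSup {m : ℕ | ∃ X : PTree α, IsEnclosedSupertree 𝒯 A X ∧ m = X.treeSize}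

end PTree

/-- `ListSplit s l r` : the list `s` is partitioned into the two
(complementary) sublists `l` and `r`. -/
inductive ListSplit {β : Type} : List β → List β → List β → Prop where
  | nil : ListSplit [] [] []
  | left {s l r : List β} (x : β) : ListSplit s l r → ListSplit (x :: s) (x :: l) r
  | right {s l r : List β} (x : β) : ListSplit s l r → ListSplit (x :: s) l (x :: r)

namespace PTree

variable {α : Type} [DecidableEq α] {k : ℕ}

/-- `(AL, AR)` is a bipartite of the forest `A`: for every `i` the set of
subtrees attached to the root of `A⁽ⁱ⁾` is partitioned into two sets, each of
which is connected by a common root to form `AL⁽ⁱ⁾` resp. `AR⁽ⁱ⁾` (an empty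
set of subtrees yielding the empty tree). -/
def IsBipartite (A AL AR : Fin k → Option (PTree α)) : Prop :=
  ∀ i, ∃ s sL sR : List (PTree α),
    A i = connect s ∧ ListSplit s sL sR ∧ AL i = connect sL ∧ AR i = connect sR

/-- Condition, at one component, for `(b 1, …, b d)` to decompose `a`:
either exactly one `b j` is isomorphic to `a` and the others are empty, or at
least two of the `b j` are nonempty and the nonempty ones are isomorphic to
pairwise distinct subtrees attached to the root of `a`. -/
def DecompAt {d : ℕ} (a : Option (PTree α)) (b : Fin d → Option (PTree α)) : Prop :=
  (∃ j, OIso (b j) a ∧ ∀ j', j' ≠ j → b j' = none) ∨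
  (∃ cs : List (PTree α), a = some (node cs) ∧
    2 ≤ (Finset.univ.filter fun j => (b j).isSome).card ∧
    ∃ idx : Fin d → Option (Fin cs.length),
      (∀ j, b j = none ↔ idx j = none) ∧
      (∀ j t m, b j = some t → idx j = some m → Iso t (cs.get m)) ∧
      (∀ j j' m, idx j = some m → idx j' = some m → j = j'))

/-- `(B 1, …, B d)` is a decomposition of the forest `A` (each `B j` being a
possibly empty sub-forest of `𝒯`). -/
def IsDecomposition (𝒯 : Fin k → PTree α) (A : Fin k → Option (PTree α))
    (d : ℕ) (B : Fin d → Fin k → Option (PTree α)) : Prop :=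
  2 ≤ d ∧ (∀ j i, OSubtree (𝒯 i) (B j i)) ∧ ∀ i, DecompAt (A i) fun j => B j i

/-- The root of the (nonempty) cut-subtree `a` is an internal node of `T`,
i.e. `a` is the complete subtree of `T` rooted at an internal node of `T`. -/
def InternalRooted (T : PTree α) : Option (PTree α) → Prop
  | none => False
  | some t => (∃ cs : List (PTree α), t = node cs) ∧ Subtree t T

/-- One rerooting step: the root is moved to an adjacent internal node. -/
inductive Reroot1 : PTree α → PTree α → Prop where
  | step (l r ds : List (PTree α)) :
      Reroot1 (node (l ++ node ds :: r)) (node (ds ++ [node (l ++ r)]))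

/-- `F` is a rooted variant of the unrooted tree (represented by) `T`:
`F` is obtained by rooting `T` at some internal node. -/
def RootedVariant (T F : PTree α) : Prop := Relation.ReflTransGen Reroot1 T F

/-- A maximal subtree of the unrooted tree (represented by) `T`: a rooted tree
obtained by first rooting `T` at some internal node and then removing at most
one nontrivial subtree attached to that node. -/
def IsMaximalSubtree (T A : PTree α) : Prop :=
  ∃ cs : List (PTree α), RootedVariant T (node cs) ∧
    (A = node cs ∨ ∃ l r ds : List (PTree α), cs = l ++ node ds :: r ∧ A = node (l ++ r))

/-- `T` (a rooted tree, rooted at an internal node) represents an unrooted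
tree without vertices of degree two: the root has at least three neighbours
and every other internal vertex has at least three neighbours as well. -/
def IsUnrootedRep (T : PTree α) : Prop :=
  (∃ cs : List (PTree α), T = node cs ∧ 3 ≤ cs.length) ∧
  ∀ cs : List (PTree α), Subtree (node cs) T → node cs ≠ T → 2 ≤ cs.length

end PTree

/-!
Leaves carry distinct labels and no node is unary, so every subtree has a nonempty leaf set
and two distinct subtrees of one tree have different leaf sets; hence a subtree is determined
by its isomorphism class. At a component `a` a decomposition is therefore fixed either by the
one block that receives all of `a` (`d` choices) or by the block, if any, receiving each of
the at most `D` subtrees attached to the root of `a` (`(d + 1) ^ D` choices). Taking the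
product over the `k` components and using `(d + 1) ^ D + d < (d + 2) ^ D` gives the bound.
-/

theorem Set.ncard_le_card_of_subset_range {β γ : Type*} [Finite β] {f : β → γ} {s : Set γ}
    (h : s ⊆ Set.range f) : s.ncard ≤ Nat.card β :=
  (Set.ncard_le_ncard h (Set.finite_range f)).trans (Finite.card_range_le f)

theorem List.Forall₂.flatMap_perm {β γ δ : Type*} {R : β → γ → Prop} {f : β → List δ}
    {g : γ → List δ} (hR : ∀ b c, R b c → (f b).Perm (g c)) :
    ∀ {l₁ : List β} {l₂ : List γ}, List.Forall₂ R l₁ l₂ →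
      (l₁.flatMap f).Perm (l₂.flatMap g)
  | _, _, .nil => .nil
  | _, _, .cons h hs => by
    simpa only [List.flatMap_cons] using (hR _ _ h).append (hs.flatMap_perm hR)

theorem List.find?_finRange_eq {n : ℕ} {p : Fin n → Bool} {o : Option (Fin n)}
    (h : ∀ m, p m ↔ o = some m) : (List.finRange n).find? p = o := by
  cases o with
  | none => exact List.find?_eq_none.2 fun m _ hm => by simpa using (h m).1 hm
  | some m =>
    obtain ⟨m', hm'⟩ := Option.isSome_iff_exists.1
      (List.find?_isSome.2 ⟨m, List.mem_finRange m, (h m).2 rfl⟩)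
    rw [hm', (h m').1 (List.find?_some hm')]

theorem Option.exists_partialInv {β γ : Type*} (f : β → Option γ)
    (hf : ∀ x y c, f x = some c → f y = some c → x = y) :
    ∃ g : γ → Option β, ∀ c x, g c = some x ↔ f x = some c := by
  classical
  refine ⟨fun c => Function.partialInv f (some c), fun c x => ?_⟩
  simp only [Function.partialInv]
  split_ifs with h
  · exact ⟨fun hx => Option.some_injective _ hx ▸ h.choose_spec,
      fun hx => congrArg some (hf _ _ _ h.choose_spec hx)⟩
  · exact ⟨nofun, fun hx => (h ⟨x, hx⟩).elim⟩

theorem Nat.add_pow_add_lt_pow {d D : ℕ} (hD : 2 ≤ D) : (d + 1) ^ D + d < (d + 2) ^ D := by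
  induction D, hD using Nat.le_induction with
  | base => nlinarith
  | succ D _ ih =>
    calc (d + 1) ^ (D + 1) + d ≤ ((d + 1) ^ D + d) * (d + 2) := by
          rw [pow_succ]; nlinarith [Nat.zero_le ((d + 1) ^ D)]
      _ < (d + 2) ^ D * (d + 2) := Nat.mul_lt_mul_of_pos_right ih (by omega)
      _ = (d + 2) ^ (D + 1) := (pow_succ _ _).symm

namespace PTree

variable {α : Type}

theorem labelList_node (cs : List (PTree α)) :
    (node cs).labelList = cs.flatMap labelList := by
  rw [labelList]
  conv_rhs => rw [← List.attach_map_subtype_val cs]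
  rw [List.flatMap_map]

theorem Subtree.trans {s t u : PTree α} (hst : Subtree s t) (htu : Subtree t u) :
    Subtree s u := by
  induction htu with
  | refl => exact hst
  | child hc _ ih => exact .child hc ih

theorem Subtree.of_mem {c : PTree α} {cs : List (PTree α)} (hc : c ∈ cs) :
    Subtree c (node cs) :=
  .child hc (.refl c)

theorem labelList_sublist_of_mem {c : PTree α} {cs : List (PTree α)} (hc : c ∈ cs) :
    c.labelList.Sublist (node cs).labelList := by
  rw [labelList_node]
  exact (List.infix_of_mem_flatten (List.mem_map_of_mem hc)).sublist

theorem Subtree.labelList_sublist {u T : PTree α} (h : Subtree u T) :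
    u.labelList.Sublist T.labelList := by
  induction h with
  | refl => exact .refl _
  | child hc _ ih => exact ih.trans (labelList_sublist_of_mem hc)

theorem NoUnaryNodes.of_subtree {T u : PTree α} (hT : NoUnaryNodes T) (hu : Subtree u T) :
    NoUnaryNodes u :=
  fun cs h => hT cs (h.trans hu)

theorem NoUnaryNodes.labelList_ne_nil {u : PTree α} (h : NoUnaryNodes u) : u.labelList ≠ [] := by
  match u, h with
  | leaf _, _ => simp [labelList]
  | node cs, h =>
    obtain ⟨c, hc⟩ := List.exists_mem_of_length_pos (lt_of_lt_of_le two_pos (h cs (.refl _)))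
    have hne : c.labelList ≠ [] := labelList_ne_nil (h.of_subtree (.of_mem hc))
    exact fun hnil => hne (List.eq_nil_of_sublist_nil (hnil ▸ labelList_sublist_of_mem hc))
termination_by sizeOf u
decreasing_by exact sizeOf_lt_of_mem hc

theorem NoUnaryNodes.length_labelList_lt {v c : PTree α} {cs : List (PTree α)}
    (h : NoUnaryNodes (node cs)) (hc : c ∈ cs) (hv : Subtree v c) :
    v.labelList.length < (node cs).labelList.length := by
  refine hv.labelList_sublist.length_le.trans_lt ?_
  obtain ⟨l, r, rfl⟩ := List.append_of_mem hc
  have hlen : 0 < (l ++ r).length := by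
    have := h _ (.refl _)
    simp only [List.length_append, List.length_cons] at this ⊢
    omega
  obtain ⟨x, hx⟩ := List.exists_mem_of_length_pos hlen
  have hx' : x ∈ l ++ c :: r := by
    simp only [List.mem_append, List.mem_cons] at hx ⊢
    tauto
  have hrest : (l ++ r).flatMap labelList ≠ [] := fun hnil =>
    (h.of_subtree (.of_mem hx')).labelList_ne_nil (List.flatMap_eq_nil_iff.1 hnil x hx)
  have := List.length_pos_of_ne_nil hrest
  simp only [labelList_node, List.flatMap_append, List.flatMap_cons, List.length_append] at this ⊢
  omega

theorem disjoint_labelList_of_mem {c c' : PTree α} {cs : List (PTree α)}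
    (h : (node cs).labelList.Nodup) (hc : c ∈ cs) (hc' : c' ∈ cs) (hne : c ≠ c') :
    c.labelList.Disjoint c'.labelList := by
  rw [labelList_node, List.nodup_flatMap] at h
  exact @List.Pairwise.forall _ _ _ ⟨fun _ _ h => h.symm⟩ h.2 _ hc _ hc' hne

theorem Iso.labelList_perm : ∀ {u v : PTree α}, Iso u v → u.labelList.Perm v.labelList
  | _, _, .leaf _ => .refl _
  | PTree.node cs, PTree.node _, .node hf hp => by
    rw [labelList_node, labelList_node]
    -- membership in `cs` is carried along for the termination argument
    refine List.Forall₂.flatMap_perm (R := fun c c' => c ∈ cs ∧ Iso c c') ?_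
      ((List.forall₂_and_left _ _).2 ⟨fun _ hc => hc, hf⟩) |>.trans (hp.flatMap_right _)
    rintro c c' ⟨hc, hcc'⟩
    exact hcc'.labelList_perm
termination_by u => sizeOf u
decreasing_by exact sizeOf_lt_of_mem hc

theorem Subtree.eq_of_iso {T u v : PTree α} (hT : T.labelList.Nodup) (hnu : NoUnaryNodes T)
    (hu : Subtree u T) (hv : Subtree v T) (huv : Iso u v) : u = v := by
  induction hu generalizing v with
  | refl =>
    cases hv with
    | refl => rfl
    | child hc hs => exact absurd huv.labelList_perm.length_eq (hnu.length_labelList_lt hc hs).ne'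
  | child hc hs ih =>
    cases hv with
    | refl => exact absurd huv.labelList_perm.length_eq (hnu.length_labelList_lt hc hs).ne
    | child hc' hs' =>
      rename_i c cs c'
      by_cases hcc' : c = c'
      · subst hcc'
        exact ih ((labelList_sublist_of_mem hc).nodup hT)
          (hnu.of_subtree (.of_mem hc)) hs' huv
      · obtain ⟨x, hx⟩ := List.exists_mem_of_ne_nil _
          (hnu.of_subtree (.child hc hs)).labelList_ne_nil
        exact (disjoint_labelList_of_mem hT hc hc' hcc' (hs.labelList_sublist.subset hx)
          (hs'.labelList_sublist.subset (huv.labelList_perm.subset hx))).elim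

theorem OSubtree.eq_of_oIso {T : PTree α} {x y : Option (PTree α)} (hT : T.labelList.Nodup)
    (hnu : NoUnaryNodes T) (hx : OSubtree T x) (hy : OSubtree T y) (hxy : OIso x y) : x = y :=
  match x, y, hx, hy, hxy with
  | none, none, _, _, _ => rfl
  | some _, some _, hu, hv, huv => congrArg some (Subtree.eq_of_iso hT hnu hu hv huv)

theorem DegLE.length_le {D : ℕ} {T : PTree α} {cs : List (PTree α)} (h : DegLE D T)
    (hs : Subtree (node cs) T) : cs.length ≤ D := by
  by_cases hT : node cs = T
  · exact h.1 cs hT.symm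
  · have := h.2 cs hs hT
    omega

def rootChildren : Option (PTree α) → List (PTree α)
  | some (node cs) => cs
  | _ => []

section Decomposition

variable {d : ℕ}

def childBlocks (cs : List (PTree α)) (g : Fin cs.length → Option (Fin d)) :
    Fin d → Option (PTree α) :=
  fun j => ((List.finRange cs.length).find? (g · = some j)).map cs.get

/-- A decomposition at `a` is coded either by the block `j` receiving all of `a`, or by
assigning each subtree attached to the root of `a` to at most one block. -/
abbrev DecompCode (d : ℕ) (a : Option (PTree α)) : Type :=
  (Fin (rootChildren a).length → Option (Fin d)) ⊕ Fin d

def decompOf (a : Option (PTree α)) : DecompCode d a → Fin d → Option (PTree α) :=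
  Sum.elim (childBlocks (rootChildren a)) fun j => Function.update (fun _ => none) j a

theorem childBlocks_eq_map_get {cs : List (PTree α)} {g : Fin cs.length → Option (Fin d)}
    {idx : Fin d → Option (Fin cs.length)} (h : ∀ m j, g m = some j ↔ idx j = some m) :
    childBlocks cs g = fun j => (idx j).map cs.get :=
  funext fun j => by
    rw [childBlocks, List.find?_finRange_eq fun m => by simpa using h m j]

theorem mem_range_decompOf {T : PTree α} (hT : T.labelList.Nodup) (hnu : NoUnaryNodes T)
    {a : Option (PTree α)} (ha : OSubtree T a) {b : Fin d → Option (PTree α)}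
    (hb : ∀ j, OSubtree T (b j)) (hdec : DecompAt a b) : b ∈ Set.range (decompOf a) := by
  rcases hdec with ⟨j, hj, hrest⟩ | ⟨cs, rfl, -, idx, hnone, hiso, hinj⟩
  · refine ⟨.inr j, funext fun j' => ?_⟩
    rcases eq_or_ne j' j with rfl | hj'
    · simp [decompOf, OSubtree.eq_of_oIso hT hnu (hb j') ha hj]
    · simp [decompOf, hj', hrest j' hj']
  · obtain ⟨g, hg⟩ := Option.exists_partialInv idx hinj
    refine ⟨.inl g, (childBlocks_eq_map_get hg).trans (funext fun j => ?_)⟩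
    cases him : idx j with
    | none => exact ((hnone j).2 him).symm
    | some m =>
      obtain ⟨t, ht⟩ := Option.ne_none_iff_exists'.1 (mt (hnone j).1 (by simp [him]))
      have hts : Subtree t T := by simpa [OSubtree, ht] using hb j
      have hmT : Subtree (cs.get m) T := (Subtree.of_mem (cs.get_mem m)).trans ha
      rw [ht, Option.map_some, Subtree.eq_of_iso hT hnu hts hmT (hiso j t m ht him)]

theorem card_decompCode_le {D : ℕ} {T : PTree α} (hD : DegLE D T) {a : Option (PTree α)}
    (ha : OSubtree T a) : Nat.card (DecompCode d a) ≤ (d + 1) ^ D + d := by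
  have hlen : (rootChildren a).length ≤ D := by
    match a, ha with
    | some (node _), ha => exact hD.length_le ha
    | some (leaf _), _ | none, _ => exact Nat.zero_le D
  simp only [Nat.card_sum, Nat.card_fun, Finite.card_option, Nat.card_fin]
  gcongr
  omega

theorem ncard_decompAt_le {D : ℕ} {T : PTree α} (hT : T.labelList.Nodup)
    (hnu : NoUnaryNodes T) (hD : DegLE D T) {a : Option (PTree α)} (ha : OSubtree T a) :
    {b : Fin d → Option (PTree α) | (∀ j, OSubtree T (b j)) ∧ DecompAt a b}.ncard
      ≤ (d + 1) ^ D + d :=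
  (Set.ncard_le_card_of_subset_range fun _ hb => mem_range_decompOf hT hnu ha hb.1 hb.2).trans
    (card_decompCode_le hD ha)

theorem ncard_isDecomposition_le {k D : ℕ} {𝒯 : Fin k → PTree α}
    (h𝒯 : ∀ i, (𝒯 i).labelList.Nodup) (hnu : ∀ i, NoUnaryNodes (𝒯 i))
    (hD : ∀ i, DegLE D (𝒯 i))
    {A : Fin k → Option (PTree α)} (hA : ∀ i, OSubtree (𝒯 i) (A i)) :
    {B : Fin d → Fin k → Option (PTree α) | IsDecomposition 𝒯 A d B}.ncard
      ≤ ((d + 1) ^ D + d) ^ k := by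
  have hcover : {B | IsDecomposition 𝒯 A d B} ⊆
      Set.range fun (w : ∀ i, DecompCode d (A i)) j i => decompOf (A i) (w i) j := by
    rintro B ⟨-, hB, hdec⟩
    choose w hw using fun i => mem_range_decompOf (h𝒯 i) (hnu i) (hA i) (hB · i) (hdec i)
    exact ⟨w, funext fun j => funext fun i => congrFun (hw i) j⟩
  calc _ ≤ Nat.card (∀ i, DecompCode d (A i)) := Set.ncard_le_card_of_subset_range hcover
    _ = ∏ i, Nat.card (DecompCode d (A i)) := Nat.card_pi
    _ ≤ ((d + 1) ^ D + d) ^ k := by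
      simpa using Finset.prod_le_pow_card Finset.univ _ _ fun i _ =>
        card_decompCode_le (hD i) (hA i)

end Decomposition

end PTree

theorem maximum_agreement_supertree_stmt15_general
    {α : Type} {k D : ℕ} (𝒯 : Fin k → PTree α)
    (hphylo : ∀ i, (𝒯 i).labelList.Nodup)
    (hnodeg2 : ∀ i, PTree.NoUnaryNodes (𝒯 i))
    (hD : ∀ i, PTree.DegLE D (𝒯 i)) (hD2 : 2 ≤ D)
    (A : Fin k → Option (PTree α))
    (hA : PTree.IsSubForest 𝒯 A)
    (d : ℕ) :
    (∀ s : Fin k, {b : Fin d → Option (PTree α) |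
        (∀ j, PTree.OSubtree (𝒯 s) (b j)) ∧ PTree.DecompAt (A s) b}.ncard
          ≤ (d + 1) ^ D + d) ∧
    ((d + 1) ^ D + d < (d + 2) ^ D) ∧
    {B : Fin d → Fin k → Option (PTree α) |
        PTree.IsDecomposition 𝒯 A d B}.ncard < (d + 2) ^ (k * D) := by
  obtain ⟨hsub, ⟨i, -⟩⟩ := hA
  have hlt : (d + 1) ^ D + d < (d + 2) ^ D := Nat.add_pow_add_lt_pow hD2
  refine ⟨fun s => PTree.ncard_decompAt_le (hphylo s) (hnodeg2 s) (hD s) (hsub s), hlt, ?_⟩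
  calc _ ≤ ((d + 1) ^ D + d) ^ k := PTree.ncard_isDecomposition_le hphylo hnodeg2 hD hsub
    _ < ((d + 2) ^ D) ^ k := Nat.pow_lt_pow_left hlt i.pos.ne'
    _ = (d + 2) ^ (k * D) := by rw [← pow_mul, mul_comm]

/-- Let every node of every tree of `𝒯` have degree at most
`D` (with `D ≥ 2`).  For every sub-forest `𝒜` of `𝒯` and every `2 ≤ d ≤ kD`:
for each `s ≤ k` the number of possible sequences `(ℬ₁⁽ˢ⁾,…,ℬ_d⁽ˢ⁾)` is at
most `(d+1)^D + d`, we have `(d+1)^D + d < (d+2)^D`, and the number of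
decompositions `(ℬ₁,…,ℬ_d)` of `𝒜` into `d` sub-forests is less than
`(d+2)^(kD)`. -/
theorem maximum_agreement_supertree_stmt15
    {α : Type} [DecidableEq α] {k D : ℕ} (𝒯 : Fin k → PTree α)
    (hphylo : ∀ i, (𝒯 i).labelList.Nodup)
    (hnodeg2 : ∀ i, PTree.NoUnaryNodes (𝒯 i))
    (hD : ∀ i, PTree.DegLE D (𝒯 i)) (hD2 : 2 ≤ D)
    (A : Fin k → Option (PTree α))
    (hA : PTree.IsSubForest 𝒯 A)
    (d : ℕ) (hd2 : 2 ≤ d) (hdkD : d ≤ k * D) :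
    (∀ s : Fin k, {b : Fin d → Option (PTree α) |
        (∀ j, PTree.OSubtree (𝒯 s) (b j)) ∧ PTree.DecompAt (A s) b}.ncard
          ≤ (d + 1) ^ D + d) ∧
    ((d + 1) ^ D + d < (d + 2) ^ D) ∧
    {B : Fin d → Fin k → Option (PTree α) |
        PTree.IsDecomposition 𝒯 A d B}.ncard < (d + 2) ^ (k * D) :=
  maximum_agreement_supertree_stmt15_general 𝒯 hphylo hnodeg2 hD hD2 A hA d
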